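/- Consider multi-head attention with H_kv key/value heads of dimension D, grouped query attention with H_q = n_rep·H_kv query heads, value projection W_v ∈ ℝ^(d×(H_kv·D)) and output projection W_o ∈ ℝ^(d×(H_q·D)). Let R ∈ ℝ^(D×D) be orthogonal, R_kv = diag(R,…,R) (H_kv copies) and R_q = diag(R,…,R) (H_q copies, respecting the grouping). If the attention context satisfies Ctx' = Attn(Q, K, V·R_kv) = Ctx·R_q (the per-head linearity of attention output in V), then the modified weights W_v' = W_v·R_kv and W_o' = W_o·R_q produce identical block output, namely Ctx'·(W_o')ᵀ = Ctx·R_q·(W_o R_q)ᵀ = Ctx·W_oᵀ, since R_q·R_qᵀ = I. -/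
import Mathlib

open Matrix

/-- Loss-preserving V/O rotation in (grouped-query) multi-head attention: with `H_q = n_rep·H_kv`
query heads of dimension `D`, an orthogonal `R`, per-head block rotations
`R_kv = diag(R,…,R)` (`H_kv` copies) and `R_q = diag(R,…,R)` (`H_q` copies), if the attention
context is per-head linear in the values, i.e. `Attn(Q,K, V·R_kv) = Attn(Q,K,V)·R_q`, then the
rotated weights `W_v' = W_v·R_kv`, `W_o' = W_o·R_q` produce exactly the same block output:
`Attn(Q,K, V·R_kv)·(W_o R_q)ᵀ = Attn(Q,K,V)·R_q·R_qᵀ·W_oᵀ = Attn(Q,K,V)·W_oᵀ`. -/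
theorem vo_rotation_invariance {d D Hkv nrep Hq s : ℕ} (hHq : Hq = nrep * Hkv)
    (R : Matrix (Fin D) (Fin D) ℝ) (hR : R * Rᵀ = 1)
    (Wv : Matrix (Fin d) (Fin D × Fin Hkv) ℝ)
    (Wo : Matrix (Fin d) (Fin D × Fin Hq) ℝ)
    (Rkv : Matrix (Fin D × Fin Hkv) (Fin D × Fin Hkv) ℝ)
    (Rq : Matrix (Fin D × Fin Hq) (Fin D × Fin Hq) ℝ)
    (hRkv : Rkv = Matrix.blockDiagonal fun _ : Fin Hkv => R)
    (hRq : Rq = Matrix.blockDiagonal fun _ : Fin Hq => R)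
    (Attn : Matrix (Fin s) (Fin D × Fin Hkv) ℝ →
            Matrix (Fin s) (Fin D × Fin Hkv) ℝ →
            Matrix (Fin s) (Fin D × Fin Hkv) ℝ →
            Matrix (Fin s) (Fin D × Fin Hq) ℝ)
    (Q K V : Matrix (Fin s) (Fin D × Fin Hkv) ℝ)
    (hAttn : Attn Q K (V * Rkv) = Attn Q K V * Rq) :
    Attn Q K (V * Rkv) * (Wo * Rq)ᵀ = Attn Q K V * Woᵀ := by
  have hRq1 : Rq * Rqᵀ = 1 := by
    rw [hRq, Matrix.blockDiagonal_transpose, ← Matrix.blockDiagonal_mul]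
    rw [show (fun _ : Fin Hq => R * Rᵀ) = fun _ => 1 from funext fun _ => hR]
    exact Matrix.blockDiagonal_one
  rw [hAttn, Matrix.transpose_mul, Matrix.mul_assoc, ← Matrix.mul_assoc Rq Rqᵀ Woᵀ, hRq1, Matrix.one_mul]
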